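/- Let (ρ_ξ)_{ξ∈Ξ} be a smooth model of strictly positive d×d density matrices with SLDs L_{i,ξ} and invertible SLD Fisher matrix G(ξ) with inverse [g^{ij}(ξ)]. Fix i ∈ {1,…,n} and suppose there is a family (Π_ε)_{ε>0} of finite-outcome estimators such that each Π_ε is locally unbiased at every ξ ∈ Ξ and lim_{ε↓0} (V_ξ(Π_ε))_{ii} = (G(ξ)⁻¹)_{ii} for every ξ ∈ Ξ. Then there exists a Hermitian matrix Fⁱ such that Σⱼ g^{ij}(ξ)L_{j,ξ} = Fⁱ − ξⁱ·I for all ξ ∈ Ξ. Consequently, if such a family exists for every i ∈ {1,…,n}, then the model is e-autoparallel with ξ m-affine in the operator sense: there exist Hermitian F¹,…,Fⁿ with Σⱼ g^{ij}(ξ)L_{j,ξ} = Fⁱ − ξⁱ·I for all i and ξ. -/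

import Mathlib

open Matrix
open scoped ComplexOrder

noncomputable section

/-- The symmetrized (Jordan) product `A∘B := (AB+BA)/2`. -/
def jprod {d : ℕ} (A B : Matrix (Fin d) (Fin d) ℂ) : Matrix (Fin d) (Fin d) ℂ :=
  (1/2 : ℂ) • (A * B + B * A)

/-- A POVM on a finite set `Ω`: positive semidefinite matrices summing to `I`. -/
def IsPOVM {d : ℕ} {Ω : Type} [Fintype Ω] (π : Ω → Matrix (Fin d) (Fin d) ℂ) : Prop :=
  (∀ ω, (π ω).PosSemidef) ∧ ∑ ω, π ω = 1

/-- Local unbiasedness of the estimator `(π, f)` at `ρ` w.r.t. SLDs `L` and values `c`. -/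
def LocUnbiased {d n : ℕ} (ρ : Matrix (Fin d) (Fin d) ℂ)
    (L : Fin n → Matrix (Fin d) (Fin d) ℂ) (c : Fin n → ℝ)
    {Ω : Type} [Fintype Ω] (π : Ω → Matrix (Fin d) (Fin d) ℂ)
    (f : Ω → Fin n → ℝ) : Prop :=
  ∀ i, Matrix.trace (ρ * ∑ ω, f ω i • π ω) = (c i : ℂ) ∧
    ∀ j, (Matrix.trace (ρ * L j * ∑ ω, f ω i • π ω)).re =
      if i = j then (1 : ℝ) else 0


/-! The operator `X = Σ_ω (f(ω) − ξⁱ) π_ω` of a locally unbiased estimator satisfies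
`⟨L_j, X⟩_ρ = δⁱⱼ` for the SLD inner product `⟨A, B⟩_ρ = Re Tr(ρAB)`, and so does
`K = Σⱼ gⁱʲ L_j`; hence `X − K ⊥ K` and `‖X − K‖²_ρ = ‖X‖²_ρ − gⁱⁱ`. Naimark's inequality
`X² ≤ Σ_ω (f(ω) − ξⁱ)² π_ω` bounds `‖X‖²_ρ` by the variance, so along an efficient filtration
`‖X_ε − K‖_ρ → 0`. Since `ρ` is positive definite this forces `Σ_ω f_ε(ω)ⁱ π_ω → ξⁱ I + K(ξ)`.
The left-hand side does not depend on `ξ`, so neither does the limit: it is `Fⁱ`. -/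

open Filter Topology

lemma isHermitian_sum_smul {m ι : Type*} [Fintype ι] {M : ι → Matrix m m ℂ}
    (hM : ∀ k, (M k).IsHermitian) (c : ι → ℝ) : (∑ k, c k • M k).IsHermitian :=
  isSelfAdjoint_sum _ fun k _ => (hM k).smul (IsSelfAdjoint.all (c k))

section SLDInner

variable {m : Type*} [Fintype m]

def sldInner (ρ : Matrix m m ℂ) : LinearMap.BilinForm ℝ (Matrix m m ℂ) :=
  LinearMap.mk₂ ℝ (fun A B => (ρ * A * B).trace.re)
    (fun _ _ _ => by simp [mul_add, add_mul])
    (fun _ _ _ => by simp [Matrix.mul_smul, Matrix.smul_mul])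
    (fun _ _ _ => by simp [mul_add])
    (fun _ _ _ => by simp [Matrix.mul_smul])

variable {ρ A B : Matrix m m ℂ}

@[simp]
lemma sldInner_apply : sldInner ρ A B = (ρ * A * B).trace.re := rfl

lemma sldInner_comm (hρ : ρ.IsHermitian) (hA : A.IsHermitian) (hB : B.IsHermitian) :
    sldInner ρ A B = sldInner ρ B A := by
  have : star (ρ * A * B).trace = (ρ * B * A).trace := by
    rw [← trace_conjTranspose, conjTranspose_mul, conjTranspose_mul, hρ.eq, hA.eq, hB.eq,
      ← Matrix.mul_assoc, trace_mul_cycle, Matrix.mul_assoc]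
  simpa using congrArg Complex.re this

lemma re_trace_mul_nonneg (hρ : ρ.PosSemidef) (hA : A.PosSemidef) : 0 ≤ (ρ * A).trace.re := by
  classical
  open scoped MatrixOrder in
  obtain ⟨B, rfl⟩ := CStarAlgebra.nonneg_iff_eq_star_mul_self.mp hρ.nonneg
  rw [star_eq_conjTranspose, Matrix.mul_assoc, trace_mul_comm]
  exact (Complex.nonneg_iff.mp (hA.mul_mul_conjTranspose_same B).trace_nonneg).1

lemma sldInner_self_nonneg (hρ : ρ.PosSemidef) (hA : A.IsHermitian) : 0 ≤ sldInner ρ A A := by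
  have h := re_trace_mul_nonneg hρ (posSemidef_self_mul_conjTranspose A)
  rwa [hA.eq, ← Matrix.mul_assoc] at h

lemma sum_smul_one_sub_mul_mul_eq [DecidableEq m] {Ω : Type*} [Fintype Ω]
    {π : Ω → Matrix m m ℂ} (hπ1 : ∑ ω, π ω = 1) {c : Ω → ℝ} {X : Matrix m m ℂ}
    (hX : ∑ ω, c ω • π ω = X) :
    ∑ ω, (c ω • 1 - X) * π ω * (c ω • 1 - X) = ∑ ω, (c ω * c ω) • π ω - X * X := by
  have hterm : ∀ ω, (c ω • 1 - X) * π ω * (c ω • 1 - X) =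
      (c ω * c ω) • π ω - (c ω • π ω) * X - X * (c ω • π ω) + X * π ω * X := fun ω => by
    simp only [sub_mul, mul_sub, smul_mul_assoc, mul_smul_comm, one_mul, mul_one, smul_sub,
      smul_smul, Matrix.mul_assoc]
    abel
  simp only [hterm, Finset.sum_add_distrib, Finset.sum_sub_distrib, ← Finset.sum_mul,
    ← Finset.mul_sum, hX, hπ1, mul_one]
  abel

lemma sldInner_self_le_variance [DecidableEq m] (hρ : ρ.PosSemidef) {Ω : Type*} [Fintype Ω]
    {π : Ω → Matrix m m ℂ} (hπ : ∀ ω, (π ω).PosSemidef) (hπ1 : ∑ ω, π ω = 1) (c : Ω → ℝ) :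
    sldInner ρ (∑ ω, c ω • π ω) (∑ ω, c ω • π ω) ≤ ∑ ω, c ω * c ω * (ρ * π ω).trace.re := by
  set X := ∑ ω, c ω • π ω with hX
  have hXh : X.IsHermitian := isHermitian_sum_smul (fun ω => (hπ ω).isHermitian) c
  have hpsd : (∑ ω, (c ω • 1 - X) * π ω * (c ω • 1 - X)).PosSemidef := by
    refine posSemidef_sum _ fun ω _ => ?_
    have hB : (c ω • 1 - X).IsHermitian := (isHermitian_one.smul (IsSelfAdjoint.all _)).sub hXh
    have h := (hπ ω).conjTranspose_mul_mul_same (c ω • 1 - X)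
    rwa [hB.eq] at h
  have hvar := re_trace_mul_nonneg hρ hpsd
  rw [sum_smul_one_sub_mul_mul_eq hπ1 hX.symm, mul_sub, trace_sub, Complex.sub_re,
    sub_nonneg] at hvar
  calc sldInner ρ X X = (ρ * (X * X)).trace.re := by rw [sldInner_apply, Matrix.mul_assoc]
    _ ≤ (ρ * ∑ ω, (c ω * c ω) • π ω).trace.re := hvar
    _ = ∑ ω, c ω * c ω * (ρ * π ω).trace.re := by simp [Finset.mul_sum, trace_sum]

variable {n : Type*} [Fintype n] [DecidableEq n] {L : n → Matrix m m ℂ} {G : Matrix n n ℝ}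

lemma sldInner_inv_gram_sum_left (hG : ∀ j k, G j k = sldInner ρ (L j) (L k))
    (hGinv : IsUnit G.det) (i k : n) :
    sldInner ρ (∑ j, G⁻¹ i j • L j) (L k) = if i = k then 1 else 0 := by
  have h := congrFun (congrFun (nonsing_inv_mul G hGinv) i) k
  simp only [mul_apply, one_apply, hG] at h
  simpa [map_sum, LinearMap.sum_apply] using h

lemma sldInner_sub_inv_gram_sum_self (hρ : ρ.IsHermitian) (hL : ∀ j, (L j).IsHermitian)
    (hG : ∀ j k, G j k = sldInner ρ (L j) (L k)) (hGinv : IsUnit G.det) {i : n}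
    {X : Matrix m m ℂ} (hX : X.IsHermitian)
    (hXL : ∀ k, sldInner ρ (L k) X = if i = k then 1 else 0) :
    sldInner ρ (X - ∑ j, G⁻¹ i j • L j) (X - ∑ j, G⁻¹ i j • L j) =
      sldInner ρ X X - G⁻¹ i i := by
  set K := ∑ j, G⁻¹ i j • L j
  have hK : K.IsHermitian := isHermitian_sum_smul hL _
  have hKL : ∀ k, sldInner ρ (L k) K = if i = k then 1 else 0 := fun k => by
    rw [sldInner_comm hρ (hL k) hK, sldInner_inv_gram_sum_left hG hGinv]
  have hdual : ∀ Y, (∀ k, sldInner ρ (L k) Y = if i = k then 1 else 0) →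
      sldInner ρ K Y = G⁻¹ i i := fun Y hY => by
    simp [K, map_sum, LinearMap.sum_apply, hY]
  have hKX := hdual X hXL
  have hXK : sldInner ρ X K = G⁻¹ i i := by rw [sldInner_comm hρ hX hK, hKX]
  simp only [map_sub, LinearMap.sub_apply, hKX, hXK, hdual K hKL]
  ring

/-- The SLD Cramér–Rao inequality `V ≥ gⁱⁱ`, with its defect made explicit. -/
lemma sldInner_sub_inv_gram_sum_le [DecidableEq m] (hρ : ρ.PosSemidef)
    (hL : ∀ j, (L j).IsHermitian) (hLtr : ∀ j, (ρ * L j).trace = 0)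
    (hG : ∀ j k, G j k = sldInner ρ (L j) (L k)) (hGinv : IsUnit G.det) {i : n}
    {Ω : Type*} [Fintype Ω] {π : Ω → Matrix m m ℂ} (hπ : ∀ ω, (π ω).PosSemidef)
    (hπ1 : ∑ ω, π ω = 1) (c : Ω → ℝ) (t : ℝ)
    (hunb : ∀ k, (ρ * L k * ∑ ω, c ω • π ω).trace.re = if i = k then 1 else 0) :
    sldInner ρ (∑ ω, c ω • π ω - (t • 1 + ∑ j, G⁻¹ i j • L j))
        (∑ ω, c ω • π ω - (t • 1 + ∑ j, G⁻¹ i j • L j)) ≤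
      ∑ ω, (c ω - t) * (c ω - t) * (ρ * π ω).trace.re - G⁻¹ i i := by
  have hX : ∑ ω, (c ω - t) • π ω = ∑ ω, c ω • π ω - t • 1 := by
    simp [sub_smul, Finset.sum_sub_distrib, ← Finset.smul_sum, hπ1]
  have hXL : ∀ k, sldInner ρ (L k) (∑ ω, (c ω - t) • π ω) = if i = k then 1 else 0 := by
    intro k
    simpa [hX, hLtr k, Matrix.mul_sub] using hunb k
  rw [← sub_sub, ← hX, sldInner_sub_inv_gram_sum_self hρ.1 hL hG hGinv
    (isHermitian_sum_smul (fun ω => (hπ ω).isHermitian) _) hXL]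
  linarith [sldInner_self_le_variance hρ hπ hπ1 fun ω => c ω - t]

end SLDInner

section Frobenius

attribute [local instance] Matrix.frobeniusNormedAddCommGroup

variable {m : Type*} [Fintype m]

lemma re_trace_mul_conjTranspose_self (M : Matrix m m ℂ) : (M * Mᴴ).trace.re = ‖M‖ ^ 2 := by
  rw [frobenius_norm_def, ← Real.sqrt_eq_rpow, Real.sq_sqrt (by positivity)]
  simp [trace, mul_apply, Complex.mul_conj, Complex.sq_norm]

/-- Writing `ρ = B*B` with `B` invertible, `⟨Y, Y⟩_ρ = ‖BY‖²` in the Frobenius norm. -/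
lemma tendsto_zero_of_sldInner_self_tendsto_zero {ρ : Matrix m m ℂ} (hρ : ρ.PosDef) {α : Type*}
    {l : Filter α} {Y : α → Matrix m m ℂ} (hY : ∀ᶠ a in l, (Y a).IsHermitian)
    (h : Tendsto (fun a => sldInner ρ (Y a) (Y a)) l (𝓝 0)) : Tendsto Y l (𝓝 0) := by
  classical
  open scoped MatrixOrder in
  obtain ⟨B, hB, rfl⟩ := CStarAlgebra.isStrictlyPositive_iff_eq_star_mul_self.mp
    hρ.isStrictlyPositive
  have hnorm : ∀ᶠ a in l, sldInner (star B * B) (Y a) (Y a) = ‖B * Y a‖ ^ 2 :=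
    hY.mono fun a ha => by
      rw [sldInner_apply, ← re_trace_mul_conjTranspose_self, conjTranspose_mul, ha.eq,
        star_eq_conjTranspose, Matrix.mul_assoc, Matrix.mul_assoc, trace_mul_comm]
      simp only [Matrix.mul_assoc]
  have hBY : Tendsto (fun a => B * Y a) l (𝓝 0) := by
    refine tendsto_zero_iff_norm_tendsto_zero.2 ?_
    simpa [Real.sqrt_sq (norm_nonneg _)] using (h.congr' hnorm).sqrt
  have hBdet : IsUnit B.det := (isUnit_iff_isUnit_det B).mp hB
  simpa [← Matrix.mul_assoc, nonsing_inv_mul B hBdet] using hBY.const_mul B⁻¹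

end Frobenius

lemma tendsto_sum_smul_of_variance_tendsto {m n : Type*} [Fintype m] [DecidableEq m] [Fintype n]
    [DecidableEq n] {ρ : Matrix m m ℂ} (hρ : ρ.PosDef) {L : n → Matrix m m ℂ}
    (hL : ∀ j, (L j).IsHermitian) (hLtr : ∀ j, (ρ * L j).trace = 0) {G : Matrix n n ℝ}
    (hG : ∀ j k, G j k = sldInner ρ (L j) (L k)) (hGinv : IsUnit G.det) {i : n} (t : ℝ)
    {α : Type*} {l : Filter α} {Ω : α → Type*} [∀ a, Fintype (Ω a)]
    {π : ∀ a, Ω a → Matrix m m ℂ} {c : ∀ a, Ω a → ℝ}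
    (hπ : ∀ᶠ a in l, (∀ ω, (π a ω).PosSemidef) ∧ ∑ ω, π a ω = 1)
    (hunb : ∀ᶠ a in l, ∀ k, (ρ * L k * ∑ ω, c a ω • π a ω).trace.re = if i = k then 1 else 0)
    (heff : Tendsto (fun a => ∑ ω, (c a ω - t) * (c a ω - t) * (ρ * π a ω).trace.re) l
      (𝓝 (G⁻¹ i i))) :
    Tendsto (fun a => ∑ ω, c a ω • π a ω) l (𝓝 (t • 1 + ∑ j, G⁻¹ i j • L j)) := by
  rw [← tendsto_sub_nhds_zero_iff]
  have hK : (t • 1 + ∑ j, G⁻¹ i j • L j).IsHermitian :=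
    (isHermitian_one.smul (IsSelfAdjoint.all t)).add (isHermitian_sum_smul hL _)
  refine tendsto_zero_of_sldInner_self_tendsto_zero hρ
    (hπ.mono fun a ha => (isHermitian_sum_smul (fun ω => (ha.1 ω).isHermitian) _).sub hK) ?_
  have hdefect : Tendsto (fun a => ∑ ω, (c a ω - t) * (c a ω - t) * (ρ * π a ω).trace.re -
      G⁻¹ i i) l (𝓝 0) := by
    simpa using heff.sub_const (G⁻¹ i i)
  refine tendsto_of_tendsto_of_tendsto_of_le_of_le' tendsto_const_nhds hdefect ?_ ?_
  · exact hπ.mono fun a ha => sldInner_self_nonneg hρ.posSemidef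
      ((isHermitian_sum_smul (fun ω => (ha.1 ω).isHermitian) _).sub hK)
  · filter_upwards [hπ, hunb] with a ha hua
    exact sldInner_sub_inv_gram_sum_le hρ.posSemidef hL hLtr hG hGinv ha.1 ha.2 _ t hua

lemma trace_jprod {d : ℕ} (A B : Matrix (Fin d) (Fin d) ℂ) : (jprod A B).trace = (A * B).trace := by
  rw [jprod, trace_smul, trace_add, trace_mul_comm B A, smul_eq_mul]
  ring

lemma trace_eq_zero_of_hasDerivAt {m : Type*} [Fintype m] {M : ℝ → Matrix m m ℂ}
    {D : Matrix m m ℂ} {t₀ : ℝ} {c : ℂ} (hM : ∀ a b, HasDerivAt (fun t => M t a b) (D a b) t₀)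
    (htr : ∀ᶠ t in 𝓝 t₀, (M t).trace = c) : D.trace = 0 :=
  (HasDerivAt.fun_sum fun a _ => hM a a).unique
    ((hasDerivAt_const t₀ c).congr_of_eventuallyEq htr)

lemma trace_mul_sld_eq_zero {d : ℕ} {ι : Type*} [DecidableEq ι] {Ξ : Set (ι → ℝ)}
    (hΞ : IsOpen Ξ) {ρ : (ι → ℝ) → Matrix (Fin d) (Fin d) ℂ} (htr : ∀ ξ ∈ Ξ, (ρ ξ).trace = 1)
    {ξ : ι → ℝ} (hξ : ξ ∈ Ξ) {j : ι} {Lj : Matrix (Fin d) (Fin d) ℂ}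
    (hL : ∀ a b, HasDerivAt (fun t => ρ (Function.update ξ j t) a b) (jprod (ρ ξ) Lj a b) (ξ j)) :
    (ρ ξ * Lj).trace = 0 := by
  have hmem : ∀ᶠ t in 𝓝 (ξ j), Function.update ξ j t ∈ Ξ :=
    (continuous_const.update j continuous_id).continuousAt.eventually_mem
      (hΞ.mem_nhds (by simpa using hξ))
  rw [← trace_jprod]
  exact trace_eq_zero_of_hasDerivAt hL (hmem.mono fun t ht => htr _ ht)

theorem efficient_filtration_implies_autoparallel_general (d n : ℕ)
    (Ξ : Set (Fin n → ℝ)) (hΞopen : IsOpen Ξ)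
    (ρ : (Fin n → ℝ) → Matrix (Fin d) (Fin d) ℂ)
    (hρ : ∀ ξ ∈ Ξ, (ρ ξ).PosDef ∧ (ρ ξ).trace = 1)
    (L : (Fin n → ℝ) → Fin n → Matrix (Fin d) (Fin d) ℂ)
    (hLherm : ∀ ξ ∈ Ξ, ∀ i, (L ξ i).IsHermitian)
    (hLsld : ∀ ξ ∈ Ξ, ∀ i, ∀ a b : Fin d,
      HasDerivAt (fun t => ρ (Function.update ξ i t) a b)
        ((jprod (ρ ξ) (L ξ i)) a b) (ξ i))
    (G : (Fin n → ℝ) → Matrix (Fin n) (Fin n) ℝ)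
    (hG : ∀ ξ ∈ Ξ, ∀ i j, G ξ i j = (Matrix.trace (ρ ξ * L ξ i * L ξ j)).re)
    (hGinv : ∀ ξ ∈ Ξ, IsUnit (G ξ).det)
    (i : Fin n)
    -- the filtration `(Π_ε)_{ε>0}` of finite-outcome estimators
    (Ω : ℝ → Type) (instΩ : ∀ ε, Fintype (Ω ε))
    (π : ∀ ε, Ω ε → Matrix (Fin d) (Fin d) ℂ) (f : ∀ ε, Ω ε → Fin n → ℝ)
    (hPOVM : ∀ ε : ℝ, 0 < ε → IsPOVM (π ε))
    (hunb : ∀ ε : ℝ, 0 < ε → ∀ ξ ∈ Ξ, LocUnbiased (ρ ξ) (L ξ) ξ (π ε) (f ε))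
    (heff : ∀ ξ ∈ Ξ, Filter.Tendsto
      (fun ε => ∑ ω, (f ε ω i - ξ i) * (f ε ω i - ξ i) *
        (Matrix.trace (ρ ξ * π ε ω)).re)
      (nhdsWithin 0 (Set.Ioi 0)) (nhds ((G ξ)⁻¹ i i))) :
    ∃ F : Matrix (Fin d) (Fin d) ℂ, F.IsHermitian ∧
      ∀ ξ ∈ Ξ, (∑ j, (G ξ)⁻¹ i j • L ξ j) =
        F - ξ i • (1 : Matrix (Fin d) (Fin d) ℂ) := by
  have hlim : ∀ ξ ∈ Ξ, Tendsto (fun ε => ∑ ω, f ε ω i • π ε ω) (𝓝[>] 0)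
      (𝓝 (ξ i • 1 + ∑ j, (G ξ)⁻¹ i j • L ξ j)) := fun ξ hξ =>
    tendsto_sum_smul_of_variance_tendsto (hρ ξ hξ).1 (hLherm ξ hξ)
      (fun j => trace_mul_sld_eq_zero hΞopen (fun ξ hξ => (hρ ξ hξ).2) hξ (hLsld ξ hξ j))
      (hG ξ hξ) (hGinv ξ hξ) (ξ i)
      (eventually_nhdsWithin_of_forall fun ε hε => hPOVM ε hε)
      (eventually_nhdsWithin_of_forall fun ε hε => (hunb ε hε ξ hξ i).2) (heff ξ hξ)
  obtain rfl | ⟨ξ₀, hξ₀⟩ := Ξ.eq_empty_or_nonempty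
  · exact ⟨0, isHermitian_zero, by simp⟩
  refine ⟨ξ₀ i • 1 + ∑ j, (G ξ₀)⁻¹ i j • L ξ₀ j,
    (isHermitian_one.smul (IsSelfAdjoint.all _)).add (isHermitian_sum_smul (hLherm ξ₀ hξ₀) _),
    fun ξ hξ => ?_⟩
  rw [tendsto_nhds_unique (hlim ξ₀ hξ₀) (hlim ξ hξ), add_sub_cancel_left]

/-- If an `eᵢeᵢᵀ`-efficient filtration of everywhere locally unbiased
estimators exists, then there is a Hermitian `Fⁱ` with
`Σⱼ gⁱʲ(ξ)L_{j,ξ} = Fⁱ − ξⁱI` for all `ξ ∈ Ξ`. -/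
theorem efficient_filtration_implies_autoparallel (d n : ℕ)
    (Ξ : Set (Fin n → ℝ)) (hΞopen : IsOpen Ξ)
    (ρ : (Fin n → ℝ) → Matrix (Fin d) (Fin d) ℂ)
    (hρ : ∀ ξ ∈ Ξ, (ρ ξ).PosDef ∧ (ρ ξ).trace = 1)
    (hinj : Set.InjOn ρ Ξ)
    (L : (Fin n → ℝ) → Fin n → Matrix (Fin d) (Fin d) ℂ)
    (hLherm : ∀ ξ ∈ Ξ, ∀ i, (L ξ i).IsHermitian)
    (hLsld : ∀ ξ ∈ Ξ, ∀ i, ∀ a b : Fin d,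
      HasDerivAt (fun t => ρ (Function.update ξ i t) a b)
        ((jprod (ρ ξ) (L ξ i)) a b) (ξ i))
    (G : (Fin n → ℝ) → Matrix (Fin n) (Fin n) ℝ)
    (hG : ∀ ξ ∈ Ξ, ∀ i j, G ξ i j = (Matrix.trace (ρ ξ * L ξ i * L ξ j)).re)
    (hGinv : ∀ ξ ∈ Ξ, IsUnit (G ξ).det)
    (i : Fin n)
    -- the filtration `(Π_ε)_{ε>0}` of finite-outcome estimators
    (Ω : ℝ → Type) (instΩ : ∀ ε, Fintype (Ω ε))
    (π : ∀ ε, Ω ε → Matrix (Fin d) (Fin d) ℂ) (f : ∀ ε, Ω ε → Fin n → ℝ)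
    (hPOVM : ∀ ε : ℝ, 0 < ε → IsPOVM (π ε))
    (hunb : ∀ ε : ℝ, 0 < ε → ∀ ξ ∈ Ξ, LocUnbiased (ρ ξ) (L ξ) ξ (π ε) (f ε))
    (heff : ∀ ξ ∈ Ξ, Filter.Tendsto
      (fun ε => ∑ ω, (f ε ω i - ξ i) * (f ε ω i - ξ i) *
        (Matrix.trace (ρ ξ * π ε ω)).re)
      (nhdsWithin 0 (Set.Ioi 0)) (nhds ((G ξ)⁻¹ i i))) :
    ∃ F : Matrix (Fin d) (Fin d) ℂ, F.IsHermitian ∧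
      ∀ ξ ∈ Ξ, (∑ j, (G ξ)⁻¹ i j • L ξ j) =
        F - ξ i • (1 : Matrix (Fin d) (Fin d) ℂ) :=
  efficient_filtration_implies_autoparallel_general d n Ξ hΞopen ρ hρ L hLherm hLsld G hG hGinv i Ω
    instΩ π f hPOVM hunb heff
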